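/- Any single random variable Z taking values in a set of size at most S can correctly predict a uniformly random bit string x ∈ {0,1}ⁿ coordinate-wise with per-coordinate success probability at least 1/2 + γ for all coordinates only if n ≤ log₂(S)/(1 − h(1/2 − γ)), where h is binary entropy. -/

import Mathlib

open Finset

/-- Binary entropy function (base 2). -/
noncomputable def binEnt (p : ℝ) : ℝ :=
  -(p * Real.logb 2 p) - (1 - p) * Real.logb 2 (1 - p)

/-! Exponential-moment argument. Put `q = 1/2 - γ`, `p = 1 - q`, and weight each input `x` by
`(p/q) ^ a x`, where `a x` counts the coordinates predicted correctly from `f x`. On a fibre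
`f x = z` this is `(p/q)` to the number of agreements of `x` with the fixed string `g · z`, so each
fibre contributes at most `(1 + p/q) ^ n = q⁻¹ ^ n` and the total is at most `S q⁻¹ ^ n`.
Since every coordinate is predicted correctly on a `p`-fraction of inputs, the mean of `a` is at
least `n p`, so by convexity of `exp` the total is at least `2 ^ n (p/q) ^ (n p)`. Comparing the
logarithms gives `n (log 2 - h(q)) ≤ log S`. -/

open Real

lemma binEnt_eq_binEntropy_div_log_two (p : ℝ) : binEnt p = binEntropy p / log 2 := by
  simp only [binEnt, binEntropy, logb, log_inv]
  ring

lemma sum_pow_card_agree_eq {ι R : Type*} [Fintype ι] [DecidableEq ι] [CommSemiring R] (l : R)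
    (y : ι → Bool) :
    ∑ x : ι → Bool, l ^ #{i | x i = y i} = (1 + l) ^ Fintype.card ι := by
  have hfactor (i : ι) : ∑ b : Bool, (if b = y i then l else 1) = 1 + l := by
    cases y i <;> simp [add_comm]
  have hprod (x : ι → Bool) : l ^ #{i | x i = y i} = ∏ i, if x i = y i then l else 1 := by
    rw [prod_ite, prod_const, prod_const_one, mul_one]
  simp_rw [hprod, ← Fintype.prod_sum fun i b => if b = y i then l else 1, hfactor, prod_const,
    card_univ]

lemma sum_pow_card_correct_le {ι F : Type*} [Fintype ι] [DecidableEq ι] [Fintype F]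
    [DecidableEq F] {l : ℝ} (hl : 0 ≤ l) (f : (ι → Bool) → F) (g : ι → F → Bool) :
    ∑ x : ι → Bool, l ^ #{i | g i (f x) = x i} ≤
      Fintype.card F * (1 + l) ^ Fintype.card ι := by
  calc ∑ x : ι → Bool, l ^ #{i | g i (f x) = x i}
      = ∑ z, ∑ x : ι → Bool with f x = z, l ^ #{i | x i = g i z} := by
        rw [← sum_fiberwise univ f]
        refine sum_congr rfl fun z _ => sum_congr rfl fun x hx => ?_
        simp_rw [(mem_filter.1 hx).2, eq_comm]
    _ ≤ ∑ z, ∑ x : ι → Bool, l ^ #{i | x i = g i z} := by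
        gcongr with z
        exact filter_subset _ _
    _ = Fintype.card F * (1 + l) ^ Fintype.card ι := by
        simp [sum_pow_card_agree_eq]

lemma card_mul_exp_le_sum_exp {α : Type*} {s : Finset α} {u : α → ℝ} {c : ℝ}
    (h : #s * c ≤ ∑ x ∈ s, u x) : #s * exp c ≤ ∑ x ∈ s, exp (u x) := by
  calc (#s : ℝ) * exp c ≤ ∑ x ∈ s, exp c * (u x - c + 1) := by
        rw [← mul_sum, sum_add_distrib, sum_sub_distrib]
        simp only [sum_const, nsmul_eq_mul, mul_one]
        nlinarith [exp_pos c]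
    _ ≤ ∑ x ∈ s, exp (u x) := by
        gcongr with x
        calc exp c * (u x - c + 1) ≤ exp c * exp (u x - c) := by gcongr; exact add_one_le_exp _
          _ = exp (u x) := by rw [← exp_add, add_sub_cancel]

lemma card_mul_le_sum_card_filter {ι X : Type*} [Fintype ι] [Fintype X] (P : ι → X → Prop)
    [∀ i x, Decidable (P i x)] {c : ℝ} (h : ∀ i, c ≤ #{x | P i x}) :
    Fintype.card ι * c ≤ ∑ x, (#{i | P i x} : ℝ) := by
  have := sum_card_bipartiteAbove_eq_sum_card_bipartiteBelow (fun x i => P i x)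
    (s := univ) (t := univ)
  calc (Fintype.card ι : ℝ) * c ≤ ∑ i, (#{x | P i x} : ℝ) := by
        simpa using sum_le_sum fun i (_ : i ∈ univ) => h i
    _ = ∑ x, (#{i | P i x} : ℝ) := by exact_mod_cast this.symm

theorem card_mul_sub_binEntropy_le_log_card {ι F : Type*} [Fintype ι] [DecidableEq ι]
    [Fintype F] [DecidableEq F] (f : (ι → Bool) → F) (g : ι → F → Bool) {q : ℝ}
    (hq0 : 0 < q) (hq : q ≤ 1 / 2)
    (hg : ∀ i, (1 - q) * 2 ^ Fintype.card ι ≤ #{x | g i (f x) = x i}) :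
    Fintype.card ι * (log 2 - binEntropy q) ≤ log (Fintype.card F) := by
  set N := Fintype.card ι
  set p := 1 - q with hp
  set a : (ι → Bool) → ℕ := fun x => #{i | g i (f x) = x i}
  -- the optimal exponent of the Chernoff-type bound below
  set t := log (p / q) with ht
  have hpq : 0 < p / q := div_pos (by linarith) hq0
  have ht0 : 0 ≤ t := log_nonneg ((one_le_div hq0).2 (by linarith))
  have hcube : (#(univ : Finset (ι → Bool)) : ℝ) = 2 ^ N := by simp [N]
  have hmean : 2 ^ N * (N * p) ≤ ∑ x, (a x : ℝ) := by
    have := card_mul_le_sum_card_filter (fun i x => g i (f x) = x i) hg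
    linarith
  have hlower : 2 ^ N * exp (N * p * t) ≤ ∑ x, exp (a x * t) := by
    rw [← hcube]
    refine card_mul_exp_le_sum_exp ?_
    rw [hcube, ← sum_mul, ← mul_assoc]
    exact mul_le_mul_of_nonneg_right hmean ht0
  have hupper : ∑ x, exp (a x * t) ≤ Fintype.card F * q⁻¹ ^ N := by
    have h1l : 1 + exp t = q⁻¹ := by
      rw [ht, exp_log hpq, hp]; field_simp; ring
    simp_rw [← h1l, exp_nat_mul]
    exact sum_pow_card_correct_le (exp_pos t).le f g
  have hF : (0 : ℝ) < Fintype.card F := mod_cast Fintype.card_pos_iff.2 ⟨f fun _ => false⟩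
  have hlog := log_le_log (by positivity) (hlower.trans hupper)
  rw [log_mul (by positivity) (by positivity), log_mul hF.ne' (by positivity), log_pow, log_pow,
    log_exp, log_inv, ht, log_div (by linarith) hq0.ne'] at hlog
  rw [binEntropy, log_inv, log_inv, ← hp]
  linear_combination hlog

/-- A variable `Z = f x` ranging in a set of size at most `S` that predicts each
coordinate of a uniform `x ∈ {0,1}ⁿ` with success probability at least `1/2+γ`
forces `n ≤ log₂ S / (1 − h(1/2 − γ))`. -/
theorem stmt5 {F : Type*} [Fintype F] (n S : ℕ) (hS : Fintype.card F ≤ S)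
    (f : (Fin n → Bool) → F) (g : Fin n → F → Bool) (γ : ℝ)
    (hγ0 : 0 < γ) (hγ1 : γ < 1 / 2)
    (hg : ∀ i : Fin n,
      1 / 2 + γ ≤
        ((univ.filter (fun x : Fin n → Bool => g i (f x) = x i)).card : ℝ) / 2 ^ n) :
    (n : ℝ) ≤ Real.logb 2 S / (1 - binEnt (1 / 2 - γ)) := by
  classical
  have hgap : 0 < log 2 - binEntropy (1 / 2 - γ) :=
    sub_pos.2 (binEntropy_lt_log_two.2 (by intro h; norm_num at h; linarith))
  have hmain := card_mul_sub_binEntropy_le_log_card f g (q := 1 / 2 - γ) (by linarith)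
    (by linarith) fun i => by
      have := hg i
      rw [le_div_iff₀ (by positivity)] at this
      rw [Fintype.card_fin]
      linarith
  rw [Fintype.card_fin] at hmain
  have hF : 0 < Fintype.card F := Fintype.card_pos_iff.2 ⟨f fun _ => false⟩
  rw [binEnt_eq_binEntropy_div_log_two, one_sub_div (log_pos one_lt_two).ne', logb,
    div_div_div_cancel_right₀ (log_pos one_lt_two).ne', le_div_iff₀ hgap]
  exact hmain.trans (log_le_log (by exact_mod_cast hF) (by exact_mod_cast hS))
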